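/- For every k ≥ 1 and every (z*,w*) in the extended solution set S_e, the PMM iterates satisfy the Fejér-type inequality ‖(z_k,w_k)−(z*,w*)‖² ≤ ‖(z_{k-1},w_{k-1})−(z*,w*)‖² − ρ_k(2−ρ_k)γ_k²‖(Mu_k+Cv_k−d, λ(w_{k-1}−Mu_k))‖². -/

import Mathlib

open scoped RealInnerProductSpace

noncomputable section

/-- `w` is a subgradient of the extended-real-valued function `φ` at `x`. -/
def HasSubgrad {E : Type*} [NormedAddCommGroup E] [InnerProductSpace ℝ E]
    (φ : E → EReal) (w x : E) : Prop :=
  ∀ x' : E, φ x + ((⟪w, x' - x⟫ : ℝ) : EReal) ≤ φ x'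

/-- `w` is an `ε`-subgradient of `φ` at `x`. -/
def HasESubgrad {E : Type*} [NormedAddCommGroup E] [InnerProductSpace ℝ E]
    (φ : E → EReal) (ε : ℝ) (w x : E) : Prop :=
  ∀ x' : E, φ x + ((⟪w, x' - x⟫ : ℝ) : EReal) - (ε : EReal) ≤ φ x'

/-- Convexity for an extended-real-valued function. -/
def ConvexE {E : Type*} [NormedAddCommGroup E] [InnerProductSpace ℝ E]
    (φ : E → EReal) : Prop :=
  ∀ x y : E, ∀ a b : ℝ, 0 ≤ a → 0 ≤ b → a + b = 1 →
    φ (a • x + b • y) ≤ (a : EReal) * φ x + (b : EReal) * φ y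

/-- Proper closed convex function with values in `(-∞, ∞]`. -/
def IsPCC {E : Type*} [NormedAddCommGroup E] [InnerProductSpace ℝ E]
    (φ : E → EReal) : Prop :=
  (∀ x, φ x ≠ ⊥) ∧ (∃ x, φ x ≠ ⊤) ∧ LowerSemicontinuous φ ∧ ConvexE φ

/-- Fenchel conjugate. -/
def fconj {E : Type*} [NormedAddCommGroup E] [InnerProductSpace ℝ E]
    (φ : E → EReal) (w : E) : EReal :=
  ⨆ x : E, ((⟪w, x⟫ : ℝ) : EReal) - φ x

/-- Lagrangian of `min { f u + g v : M u + C v = d }`. -/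
def Lag {E₁ E₂ F : Type*} [NormedAddCommGroup E₁] [InnerProductSpace ℝ E₁]
    [NormedAddCommGroup E₂] [InnerProductSpace ℝ E₂]
    [NormedAddCommGroup F] [InnerProductSpace ℝ F]
    (f : E₁ → EReal) (g : E₂ → EReal) (M : E₁ →ₗ[ℝ] F) (C : E₂ →ₗ[ℝ] F) (d : F)
    (u : E₁) (v : E₂) (z : F) : EReal :=
  f u + g v + ((⟪M u + C v - d, z⟫ : ℝ) : EReal)

/-- Saddle point of the Lagrangian. -/
def IsSaddle {E₁ E₂ F : Type*} [NormedAddCommGroup E₁] [InnerProductSpace ℝ E₁]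
    [NormedAddCommGroup E₂] [InnerProductSpace ℝ E₂]
    [NormedAddCommGroup F] [InnerProductSpace ℝ F]
    (f : E₁ → EReal) (g : E₂ → EReal) (M : E₁ →ₗ[ℝ] F) (C : E₂ →ₗ[ℝ] F) (d : F)
    (us : E₁) (vs : E₂) (zs : F) : Prop :=
  Lag f g M C d us vs zs ≠ ⊤ ∧ Lag f g M C d us vs zs ≠ ⊥ ∧
  (∀ u v, Lag f g M C d us vs zs ≤ Lag f g M C d u v zs) ∧
  (∀ ζ, Lag f g M C d us vs ζ ≤ Lag f g M C d us vs zs)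

/-- `h₁(z) = f*(-M* z)`. -/
def hOne {E₁ F : Type*} [NormedAddCommGroup E₁] [InnerProductSpace ℝ E₁]
    [FiniteDimensional ℝ E₁] [NormedAddCommGroup F] [InnerProductSpace ℝ F]
    [FiniteDimensional ℝ F] (f : E₁ → EReal) (M : E₁ →ₗ[ℝ] F) (z : F) : EReal :=
  fconj f (-(LinearMap.adjoint M z))

/-- `h₂(z) = g*(-C* z) + ⟪d, z⟫`. -/
def hTwo {E₂ F : Type*} [NormedAddCommGroup E₂] [InnerProductSpace ℝ E₂]
    [FiniteDimensional ℝ E₂] [NormedAddCommGroup F] [InnerProductSpace ℝ F]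
    [FiniteDimensional ℝ F] (g : E₂ → EReal) (C : E₂ →ₗ[ℝ] F) (d : F) (z : F) : EReal :=
  fconj g (-(LinearMap.adjoint C z)) + ((⟪d, z⟫ : ℝ) : EReal)

/-- The extended solution set `S_e(∂h₁, ∂h₂)`. -/
def extSolSet {E₁ E₂ F : Type*} [NormedAddCommGroup E₁] [InnerProductSpace ℝ E₁]
    [FiniteDimensional ℝ E₁] [NormedAddCommGroup E₂] [InnerProductSpace ℝ E₂]
    [FiniteDimensional ℝ E₂] [NormedAddCommGroup F] [InnerProductSpace ℝ F]
    [FiniteDimensional ℝ F]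
    (f : E₁ → EReal) (g : E₂ → EReal) (M : E₁ →ₗ[ℝ] F) (C : E₂ →ₗ[ℝ] F) (d : F) :
    Set (F × F) :=
  {p | HasSubgrad (hOne f M) (-p.2) p.1 ∧ HasSubgrad (hTwo g C d) p.2 p.1}

/-!
The optimality conditions of the two subproblems, read through Fenchel–Young, say that
`d - C vₖ ∈ ∂h₂(xₖ)` and `-M uₖ ∈ ∂h₁(yₖ)` at `xₖ = zₖ₋₁ + λ wₖ₋₁ + λ (C vₖ - d)` and
`yₖ = xₖ - λ (wₖ₋₁ - M uₖ)`. Adding the two monotonicity inequalities against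
`w* ∈ ∂h₂(z*)`, `-w* ∈ ∂h₁(z*)` gives, with `a = M uₖ + C vₖ - d` and `b = λ (wₖ₋₁ - M uₖ)`,
`⟪zₖ₋₁ - z*, a⟫ - ⟪wₖ₋₁ - w*, b⟫ ≤ -γₖ (‖a‖² + ‖b‖²)`: the solution lies in a half-space and
the PMM update is a relaxed projection onto it, for which the Fejér estimate is elementary.
-/

open Filter Topology

lemma le_of_forall_le_add_mul {a b c : ℝ} (h : ∀ t ∈ Set.Ioc (0 : ℝ) 1, a ≤ b + t * c) :
    a ≤ b := by
  have hcont : Continuous fun t : ℝ => b + t * c := by fun_prop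
  have hlim : Tendsto (fun t : ℝ => b + t * c) (𝓝[>] 0) (𝓝 b) := by
    simpa using (hcont.tendsto 0).mono_left nhdsWithin_le_nhds
  exact ge_of_tendsto hlim (eventually_of_mem (Ioc_mem_nhdsGT one_pos) h)

lemma exists_eq_coe_of_minimizes_add {X : Type*} {φ : X → EReal} (hbot : ∀ x, φ x ≠ ⊥)
    (hproper : ∃ x, φ x ≠ ⊤) {Q : X → ℝ} {x₀ : X}
    (hmin : ∀ x, φ x₀ + (Q x₀ : EReal) ≤ φ x + (Q x : EReal)) :
    ∃ r : ℝ, φ x₀ = r := by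
  obtain ⟨x₁, hx₁⟩ := hproper
  induction h₀ : φ x₀ using EReal.rec with
  | bot => exact absurd h₀ (hbot x₀)
  | coe r => exact ⟨r, rfl⟩
  | top =>
    have := hmin x₁
    rw [h₀, EReal.top_add_coe, top_le_iff] at this
    induction h₁ : φ x₁ using EReal.rec with
    | bot => exact absurd h₁ (hbot x₁)
    | coe r => rw [h₁, ← EReal.coe_add] at this; exact absurd this (EReal.coe_ne_top _)
    | top => exact absurd h₁ hx₁

section ConvexAnalysis

variable {E F : Type*} [NormedAddCommGroup E] [InnerProductSpace ℝ E]
  [NormedAddCommGroup F] [InnerProductSpace ℝ F]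

lemma le_fconj (φ : E → EReal) (w x : E) : ((⟪w, x⟫ : ℝ) : EReal) - φ x ≤ fconj φ w :=
  le_iSup (fun x => ((⟪w, x⟫ : ℝ) : EReal) - φ x) x

lemma fconj_eq_of_hasSubgrad {φ : E → EReal} {w x : E} {r : ℝ} (h : HasSubgrad φ w x)
    (hx : φ x = r) : fconj φ w = ((⟪w, x⟫ - r : ℝ) : EReal) := by
  refine le_antisymm (iSup_le fun x' => ?_) (by simpa [hx] using le_fconj φ w x)
  have hx' := h x'
  rw [hx] at hx'
  induction h' : φ x' using EReal.rec with
  | bot => rw [h', ← EReal.coe_add] at hx'; exact absurd (le_bot_iff.mp hx') (EReal.coe_ne_bot _)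
  | coe r' =>
    rw [h', ← EReal.coe_add, EReal.coe_le_coe_iff, inner_sub_right] at hx'
    rw [← EReal.coe_sub, EReal.coe_le_coe_iff]
    linarith
  | top => simp

lemma hasSubgrad_fconj {φ : E → EReal} {w x : E} {r : ℝ} (h : HasSubgrad φ w x)
    (hx : φ x = r) : HasSubgrad (fconj φ) x w := by
  intro w'
  rw [fconj_eq_of_hasSubgrad h hx, ← EReal.coe_add]
  calc (((⟪w, x⟫ - r + ⟪x, w' - w⟫ : ℝ)) : EReal) = ((⟪w', x⟫ : ℝ) : EReal) - φ x := by
        rw [hx, ← EReal.coe_sub, inner_sub_right, real_inner_comm x w, real_inner_comm x w']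
        ring_nf
    _ ≤ fconj φ w' := le_fconj φ w' x

lemma HasSubgrad.inner_sub_nonneg {φ : E → EReal} {a b x y : E} {r : ℝ}
    (ha : HasSubgrad φ a x) (hb : HasSubgrad φ b y) (hx : φ x = r) :
    0 ≤ ⟪a - b, x - y⟫ := by
  have hxy := ha y
  have hyx := hb x
  rw [hx] at hxy hyx
  induction h : φ y using EReal.rec with
  | bot => rw [h, ← EReal.coe_add] at hxy; exact absurd (le_bot_iff.mp hxy) (EReal.coe_ne_bot _)
  | coe s =>
    rw [h, ← EReal.coe_add, EReal.coe_le_coe_iff] at hxy hyx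
    have : ⟪a, y - x⟫ = -⟪a, x - y⟫ := by rw [← inner_neg_right, neg_sub]
    rw [inner_sub_left]
    linarith
  | top => rw [h, EReal.top_add_coe, top_le_iff] at hyx; exact absurd hyx (EReal.coe_ne_top _)

lemma HasSubgrad.add_inner {φ : E → EReal} {w x : E} (h : HasSubgrad φ w x) (d : E) :
    HasSubgrad (fun x => φ x + ((⟪d, x⟫ : ℝ) : EReal)) (w + d) x := by
  intro x'
  calc φ x + ((⟪d, x⟫ : ℝ) : EReal) + ((⟪w + d, x' - x⟫ : ℝ) : EReal)
      = φ x + ((⟪w, x' - x⟫ : ℝ) : EReal) + ((⟪d, x'⟫ : ℝ) : EReal) := by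
        rw [add_assoc, add_assoc, ← EReal.coe_add, ← EReal.coe_add, inner_add_left,
          inner_sub_right d]
        ring_nf
    _ ≤ φ x' + ((⟪d, x'⟫ : ℝ) : EReal) := add_le_add_left (h x') _

variable [FiniteDimensional ℝ E] [FiniteDimensional ℝ F]

lemma HasSubgrad.comp_neg_adjoint {ψ : E → EReal} {A : E →ₗ[ℝ] F} {x : E} {y : F}
    (h : HasSubgrad ψ x (-(LinearMap.adjoint A y))) :
    HasSubgrad (fun y => ψ (-(LinearMap.adjoint A y))) (-(A x)) y := by
  intro y'
  convert h (-(LinearMap.adjoint A y')) using 3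
  rw [← neg_sub', ← map_sub, inner_neg_right, inner_neg_left, LinearMap.adjoint_inner_right]

lemma ConvexE.hasSubgrad_of_minimizes_add_sq {φ : E → EReal} (hconv : ConvexE φ)
    (hbot : ∀ x, φ x ≠ ⊥) (hproper : ∃ x, φ x ≠ ⊤) {L : E →ₗ[ℝ] F} {s e : F} {lam : ℝ}
    {v₀ : E} (hmin : ∀ v, φ v₀ + ((⟪s, L v₀ - e⟫ + lam / 2 * ‖L v₀ - e‖ ^ 2 : ℝ) : EReal) ≤
      φ v + ((⟪s, L v - e⟫ + lam / 2 * ‖L v - e‖ ^ 2 : ℝ) : EReal)) :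
    ∃ r : ℝ, φ v₀ = r ∧ HasSubgrad φ (-(LinearMap.adjoint L (s + lam • (L v₀ - e)))) v₀ := by
  obtain ⟨r₀, h₀⟩ := exists_eq_coe_of_minimizes_add hbot hproper
    (Q := fun v => ⟪s, L v - e⟫ + lam / 2 * ‖L v - e‖ ^ 2) hmin
  refine ⟨r₀, h₀, fun v => ?_⟩
  set Δ := L v - L v₀
  have hinner : ⟪-(LinearMap.adjoint L (s + lam • (L v₀ - e))), v - v₀⟫ =
      -(⟪s, Δ⟫ + lam * ⟪L v₀ - e, Δ⟫) := by
    rw [inner_neg_left, LinearMap.adjoint_inner_left, map_sub, inner_add_left,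
      real_inner_smul_left]
  rw [h₀, hinner, ← EReal.coe_add]
  induction hv : φ v using EReal.rec with
  | bot => exact absurd hv (hbot v)
  | top => exact le_top
  | coe r =>
    rw [EReal.coe_le_coe_iff]
    suffices r₀ ≤ r + (⟪s, Δ⟫ + lam * ⟪L v₀ - e, Δ⟫) by linarith
    refine le_of_forall_le_add_mul (c := lam / 2 * ‖Δ‖ ^ 2) fun t ⟨ht₀, ht₁⟩ => ?_
    have hseg : L ((1 - t) • v₀ + t • v) - e = (L v₀ - e) + t • Δ := by
      simp only [map_add, map_smul, Δ]
      module
    have hconvt := hconv v₀ v (1 - t) t (by linarith) ht₀.le (by ring)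
    rw [h₀, hv, ← EReal.coe_mul, ← EReal.coe_mul, ← EReal.coe_add] at hconvt
    have hle := (hmin ((1 - t) • v₀ + t • v)).trans (add_le_add_left hconvt _)
    rw [h₀, ← EReal.coe_add, ← EReal.coe_add, EReal.coe_le_coe_iff, hseg, norm_add_sq_real,
      inner_add_right, real_inner_smul_right, real_inner_smul_right, norm_smul,
      Real.norm_of_nonneg ht₀.le] at hle
    refine le_of_mul_le_mul_left ?_ ht₀
    nlinarith

lemma hasSubgrad_hOne {f : E → EReal} {M : E →ₗ[ℝ] F} {u : E} {y : F} {r : ℝ}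
    (h : HasSubgrad f (-(LinearMap.adjoint M y)) u) (hu : f u = r) :
    HasSubgrad (hOne f M) (-(M u)) y ∧
      hOne f M y = ((⟪-(LinearMap.adjoint M y), u⟫ - r : ℝ) : EReal) :=
  ⟨(hasSubgrad_fconj h hu).comp_neg_adjoint, fconj_eq_of_hasSubgrad h hu⟩

lemma hasSubgrad_hTwo {g : E → EReal} {C : E →ₗ[ℝ] F} {d : F} {v : E} {x : F} {r : ℝ}
    (h : HasSubgrad g (-(LinearMap.adjoint C x)) v) (hv : g v = r) :
    HasSubgrad (hTwo g C d) (-(C v) + d) x ∧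
      hTwo g C d x = ((⟪-(LinearMap.adjoint C x), v⟫ - r + ⟪d, x⟫ : ℝ) : EReal) :=
  ⟨(hasSubgrad_fconj h hv).comp_neg_adjoint.add_inner d,
    by rw [hTwo, fconj_eq_of_hasSubgrad h hv, EReal.coe_add]⟩

end ConvexAnalysis

section Algebra

variable {E F : Type*} [NormedAddCommGroup E] [InnerProductSpace ℝ E]
  [NormedAddCommGroup F] [InnerProductSpace ℝ F]

lemma norm_add_smul_sq_add_le {p a : E} {q b : F} {γ ρ : ℝ} (hγ : 0 ≤ γ) (hρ : 0 ≤ ρ)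
    (h : ⟪p, a⟫ + ⟪q, b⟫ ≤ -γ * (‖a‖ ^ 2 + ‖b‖ ^ 2)) :
    ‖p + (ρ * γ) • a‖ ^ 2 + ‖q + (ρ * γ) • b‖ ^ 2 ≤
      ‖p‖ ^ 2 + ‖q‖ ^ 2 - ρ * (2 - ρ) * γ ^ 2 * (‖a‖ ^ 2 + ‖b‖ ^ 2) := by
  have hstep := mul_le_mul_of_nonneg_left h (mul_nonneg hρ hγ)
  rw [norm_add_sq_real, norm_add_sq_real, real_inner_smul_right, real_inner_smul_right,
    norm_smul, norm_smul, Real.norm_of_nonneg (mul_nonneg hρ hγ)]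
  nlinarith

lemma real_inner_le_norm_add_sq (a b : F) : ⟪a, b⟫ ≤ ‖a + b‖ ^ 2 := by
  rw [norm_add_sq_real]
  nlinarith [abs_real_inner_le_norm a b, neg_abs_le ⟪a, b⟫, sq_nonneg (‖a‖ - ‖b‖)]

variable {lam γ : ℝ} {z₀ w₀ zs ws m p d : F}

lemma pmm_numerator_nonneg (hlam : 0 ≤ lam) :
    0 ≤ lam * ‖p - d + w₀‖ ^ 2 + lam * ⟪d - p - m, w₀ - m⟫ := by
  have h := real_inner_le_norm_add_sq (m + p - d) (w₀ - m)
  rw [show m + p - d + (w₀ - m) = p - d + w₀ by abel] at h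
  rw [show d - p - m = -(m + p - d) by abel, inner_neg_left, ← mul_add]
  exact mul_nonneg hlam (by linarith)

lemma pmm_halfspace_inequality (hlam : 0 ≤ lam)
    (hA : 0 ≤ ⟪-p + d - ws, z₀ + lam • w₀ + lam • (p - d) - zs⟫)
    (hB : 0 ≤ ⟪-m - -ws, z₀ + lam • (p - d) + lam • m - zs⟫)
    (hγ : γ = (lam * ‖p - d + w₀‖ ^ 2 + lam * ⟪d - p - m, w₀ - m⟫) /
      (‖m + p - d‖ ^ 2 + lam ^ 2 * ‖m - w₀‖ ^ 2)) :
    ⟪z₀ - zs, m + p - d⟫ + ⟪w₀ - ws, -(lam • (w₀ - m))⟫ ≤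
      -γ * (‖m + p - d‖ ^ 2 + ‖-(lam • (w₀ - m))‖ ^ 2) := by
  set N := lam * ‖p - d + w₀‖ ^ 2 + lam * ⟪d - p - m, w₀ - m⟫
  set S := ‖m + p - d‖ ^ 2 + lam ^ 2 * ‖m - w₀‖ ^ 2
  have hid : ⟪z₀ - zs, m + p - d⟫ + ⟪w₀ - ws, -(lam • (w₀ - m))⟫ + N =
      -(⟪-p + d - ws, z₀ + lam • w₀ + lam • (p - d) - zs⟫ +
        ⟪-m - -ws, z₀ + lam • (p - d) + lam • m - zs⟫) := by
    simp only [N, ← real_inner_self_eq_norm_sq, inner_add_left, inner_add_right,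
      inner_sub_left, inner_sub_right, inner_neg_left, inner_neg_right, real_inner_smul_right,
      real_inner_comm]
    ring
  have hnorm : ‖-(lam • (w₀ - m))‖ ^ 2 = lam ^ 2 * ‖m - w₀‖ ^ 2 := by
    rw [norm_neg, norm_smul, norm_sub_rev, mul_pow, Real.norm_eq_abs, sq_abs]
  have hγS : γ * S ≤ N := by
    rw [hγ]
    rcases eq_or_ne S 0 with hS | hS
    -- `S = 0` forces `γ = 0` through `x / 0 = 0`
    · simpa [hS] using pmm_numerator_nonneg hlam
    · rw [div_mul_cancel₀ _ hS]
  rw [hnorm]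
  linarith

lemma pmm_stepsize_nonneg (hlam : 0 ≤ lam)
    (hγ : γ = (lam * ‖p - d + w₀‖ ^ 2 + lam * ⟪d - p - m, w₀ - m⟫) /
      (‖m + p - d‖ ^ 2 + lam ^ 2 * ‖m - w₀‖ ^ 2)) : 0 ≤ γ :=
  hγ ▸ div_nonneg (pmm_numerator_nonneg hlam) (by positivity)

end Algebra

theorem pmm_fejer_general
    (m1 m2 n : ℕ)
    (f : EuclideanSpace ℝ (Fin m1) → EReal) (g : EuclideanSpace ℝ (Fin m2) → EReal)
    (hf : IsPCC f) (hg : IsPCC g)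
    (M : EuclideanSpace ℝ (Fin m1) →ₗ[ℝ] EuclideanSpace ℝ (Fin n))
    (C : EuclideanSpace ℝ (Fin m2) →ₗ[ℝ] EuclideanSpace ℝ (Fin n))
    (d : EuclideanSpace ℝ (Fin n))
    (lam : ℝ) (hlam : 0 < lam) (ρb : ℝ) (hρb : ρb ∈ Set.Ico (0 : ℝ) 1)
    (u : ℕ → EuclideanSpace ℝ (Fin m1)) (v : ℕ → EuclideanSpace ℝ (Fin m2))
    (z w : ℕ → EuclideanSpace ℝ (Fin n)) (γ ρ : ℕ → ℝ)
    (hv : ∀ k, 1 ≤ k → ∀ v' : EuclideanSpace ℝ (Fin m2),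
      g (v k) + ((⟪z (k-1) + lam • w (k-1), C (v k) - d⟫ +
          lam / 2 * ‖C (v k) - d‖ ^ 2 : ℝ) : EReal) ≤
        g v' + ((⟪z (k-1) + lam • w (k-1), C v' - d⟫ +
          lam / 2 * ‖C v' - d‖ ^ 2 : ℝ) : EReal))
    (hu : ∀ k, 1 ≤ k → ∀ u' : EuclideanSpace ℝ (Fin m1),
      f (u k) + ((⟪z (k-1) + lam • (C (v k) - d), M (u k)⟫ +
          lam / 2 * ‖M (u k)‖ ^ 2 : ℝ) : EReal) ≤
        f u' + ((⟪z (k-1) + lam • (C (v k) - d), M u'⟫ +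
          lam / 2 * ‖M u'‖ ^ 2 : ℝ) : EReal))
    (hγ : ∀ k, 1 ≤ k → γ k = (lam * ‖C (v k) - d + w (k-1)‖ ^ 2 +
        lam * ⟪d - C (v k) - M (u k), w (k-1) - M (u k)⟫) /
      (‖M (u k) + C (v k) - d‖ ^ 2 + lam ^ 2 * ‖M (u k) - w (k-1)‖ ^ 2))
    (hρ : ∀ k, 1 ≤ k → ρ k ∈ Set.Icc (1 - ρb) (1 + ρb))
    (hz : ∀ k, 1 ≤ k → z k = z (k-1) + (ρ k * γ k) • (M (u k) + C (v k) - d))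
    (hw : ∀ k, 1 ≤ k → w k = w (k-1) - (ρ k * γ k * lam) • (w (k-1) - M (u k)))
    (k : ℕ) (hk : 1 ≤ k)
    (zs ws : EuclideanSpace ℝ (Fin n))
    (hmem : (zs, ws) ∈ extSolSet f g M C d) :
    ‖z k - zs‖ ^ 2 + ‖w k - ws‖ ^ 2 ≤
      ‖z (k-1) - zs‖ ^ 2 + ‖w (k-1) - ws‖ ^ 2 -
        ρ k * (2 - ρ k) * γ k ^ 2 *
          (‖M (u k) + C (v k) - d‖ ^ 2 + ‖lam • (w (k-1) - M (u k))‖ ^ 2) := by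
  obtain ⟨hsol₁, hsol₂⟩ := hmem
  obtain ⟨rg, hgv, hg_sub⟩ := hg.2.2.2.hasSubgrad_of_minimizes_add_sq hg.1 hg.2.1 (hv k hk)
  obtain ⟨rf, hfu, hf_sub⟩ := hf.2.2.2.hasSubgrad_of_minimizes_add_sq hf.1 hf.2.1
    (L := M) (e := 0) (by simpa only [sub_zero] using hu k hk)
  obtain ⟨h₂_sub, h₂_val⟩ := hasSubgrad_hTwo (d := d) hg_sub hgv
  obtain ⟨h₁_sub, h₁_val⟩ := hasSubgrad_hOne hf_sub hfu
  have hA := h₂_sub.inner_sub_nonneg hsol₂ h₂_val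
  have hB := h₁_sub.inner_sub_nonneg hsol₁ h₁_val
  rw [sub_zero] at hB
  have hkey := pmm_halfspace_inequality hlam.le hA hB (hγ k hk)
  have hρ₀ : 0 ≤ ρ k := by linarith [(hρ k hk).1, hρb.2]
  have hz' : z k - zs = (z (k-1) - zs) + (ρ k * γ k) • (M (u k) + C (v k) - d) := by
    rw [hz k hk]; abel
  have hw' : w k - ws = (w (k-1) - ws) + (ρ k * γ k) • -(lam • (w (k-1) - M (u k))) := by
    rw [hw k hk]; module
  rw [hz', hw', ← norm_neg (lam • _)]
  exact norm_add_smul_sq_add_le (pmm_stepsize_nonneg hlam.le (hγ k hk)) hρ₀ hkey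

/-- Fejér-type inequality for the PMM iterates with respect to any
point of the extended solution set. -/
theorem pmm_fejer
    (m1 m2 n : ℕ)
    (f : EuclideanSpace ℝ (Fin m1) → EReal) (g : EuclideanSpace ℝ (Fin m2) → EReal)
    (hf : IsPCC f) (hg : IsPCC g)
    (M : EuclideanSpace ℝ (Fin m1) →ₗ[ℝ] EuclideanSpace ℝ (Fin n))
    (C : EuclideanSpace ℝ (Fin m2) →ₗ[ℝ] EuclideanSpace ℝ (Fin n))
    (d : EuclideanSpace ℝ (Fin n))
    (lam : ℝ) (hlam : 0 < lam) (ρb : ℝ) (hρb : ρb ∈ Set.Ico (0 : ℝ) 1)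
    (u : ℕ → EuclideanSpace ℝ (Fin m1)) (v : ℕ → EuclideanSpace ℝ (Fin m2))
    (z w x y : ℕ → EuclideanSpace ℝ (Fin n)) (γ ρ : ℕ → ℝ)
    (hv : ∀ k, 1 ≤ k → ∀ v' : EuclideanSpace ℝ (Fin m2),
      g (v k) + ((⟪z (k-1) + lam • w (k-1), C (v k) - d⟫ +
          lam / 2 * ‖C (v k) - d‖ ^ 2 : ℝ) : EReal) ≤
        g v' + ((⟪z (k-1) + lam • w (k-1), C v' - d⟫ +
          lam / 2 * ‖C v' - d‖ ^ 2 : ℝ) : EReal))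
    (hu : ∀ k, 1 ≤ k → ∀ u' : EuclideanSpace ℝ (Fin m1),
      f (u k) + ((⟪z (k-1) + lam • (C (v k) - d), M (u k)⟫ +
          lam / 2 * ‖M (u k)‖ ^ 2 : ℝ) : EReal) ≤
        f u' + ((⟪z (k-1) + lam • (C (v k) - d), M u'⟫ +
          lam / 2 * ‖M u'‖ ^ 2 : ℝ) : EReal))
    (hx : ∀ k, 1 ≤ k → x k = z (k-1) + lam • w (k-1) + lam • (C (v k) - d))
    (hy : ∀ k, 1 ≤ k → y k = x k - lam • (w (k-1) - M (u k)))
    (hnz : ∀ k, 1 ≤ k → ‖M (u k) + C (v k) - d‖ + ‖M (u k) - w (k-1)‖ ≠ 0)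
    (hγ : ∀ k, 1 ≤ k → γ k = (lam * ‖C (v k) - d + w (k-1)‖ ^ 2 +
        lam * ⟪d - C (v k) - M (u k), w (k-1) - M (u k)⟫) /
      (‖M (u k) + C (v k) - d‖ ^ 2 + lam ^ 2 * ‖M (u k) - w (k-1)‖ ^ 2))
    (hρ : ∀ k, 1 ≤ k → ρ k ∈ Set.Icc (1 - ρb) (1 + ρb))
    (hz : ∀ k, 1 ≤ k → z k = z (k-1) + (ρ k * γ k) • (M (u k) + C (v k) - d))
    (hw : ∀ k, 1 ≤ k → w k = w (k-1) - (ρ k * γ k * lam) • (w (k-1) - M (u k)))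
    (k : ℕ) (hk : 1 ≤ k)
    (zs ws : EuclideanSpace ℝ (Fin n))
    (hmem : (zs, ws) ∈ extSolSet f g M C d) :
    ‖z k - zs‖ ^ 2 + ‖w k - ws‖ ^ 2 ≤
      ‖z (k-1) - zs‖ ^ 2 + ‖w (k-1) - ws‖ ^ 2 -
        ρ k * (2 - ρ k) * γ k ^ 2 *
          (‖M (u k) + C (v k) - d‖ ^ 2 + ‖lam • (w (k-1) - M (u k))‖ ^ 2) :=
  pmm_fejer_general m1 m2 n f g hf hg M C d lam hlam ρb hρb u v z w γ ρ hv hu hγ hρ hz hw k hk zs ws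
    hmem
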